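/- Let n ≥ 1 be an integer, k ≥ 0 a real number, and λ = k(k+n−1). Let L be the linear operator acting on smooth functions on (0,∞) × ℝ (coordinates (r,z)) by L f = −∂²f/∂z² − ∂²f/∂r² − (n/r)·∂f/∂r + (λ/r²)·f, and for each integer j ≥ 0 let P_{k,j} be the real vector space of functions of the form (r,z) ↦ Σ_{l=0}^{⌊j/2⌋} a_l · r^{k+2l} · z^{j−2l} with a_l ∈ ℝ. Then: (i) for j ≥ 2, L maps P_{k,j} into P_{k,j−2}; (ii) for every j ≥ 0, the space H_{k,j} := P_{k,j} ∩ ker(L) is one-dimensional; (iii) for j ≥ 2, P_{k,j} is the direct sum of H_{k,j} and the space {(r,z) ↦ (r²+z²)·p(r,z) : p ∈ P_{k,j−2}}. -/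

import Mathlib

open Real Finset

/-- The function `(r,z) ↦ Σ_{l=0}^{⌊j/2⌋} a_l r^{k+2l} z^{j-2l}`
(coordinates `(r,z)`, `r^{k+2l}` is the real power). -/
noncomputable def polyFun (k : ℝ) (j : ℕ) (a : ℕ → ℝ) : ℝ → ℝ → ℝ :=
  fun r z => ∑ l ∈ Finset.range (j / 2 + 1),
    a l * r ^ (k + 2 * (l : ℝ)) * z ^ (j - 2 * l)

/-- The space `P_{k,j}` of functions of the form
`(r,z) ↦ Σ_{l=0}^{⌊j/2⌋} a_l r^{k+2l} z^{j-2l}`. -/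
def Pspace (k : ℝ) (j : ℕ) : Set (ℝ → ℝ → ℝ) :=
  { f | ∃ a : ℕ → ℝ, f = polyFun k j a }

/-- Partial derivative in the variable `z`. -/
noncomputable def pdz (f : ℝ → ℝ → ℝ) (r z : ℝ) : ℝ := deriv (fun z' => f r z') z

/-- Partial derivative in the variable `r`. -/
noncomputable def pdr (f : ℝ → ℝ → ℝ) (r z : ℝ) : ℝ := deriv (fun r' => f r' z) r

/-- The operator `L f = -∂²f/∂z² - ∂²f/∂r² - (n/r)∂f/∂r + (λ/r²)f`. -/
noncomputable def Lop (n : ℕ) (lam : ℝ) (f : ℝ → ℝ → ℝ) : ℝ → ℝ → ℝ :=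
  fun r z => -pdz (pdz f) r z - pdr (pdr f) r z - ((n : ℝ) / r) * pdr f r z
    + lam / r ^ 2 * f r z

/-! On a monomial, `L (r^(k+2l) z^m) = -m(m-1) r^(k+2l) z^(m-2) - 2l(2k+2l+n-1) r^(k+2l-2) z^m`
because `λ = k(k+n-1)` makes `r^k` annihilated by the radial part. Hence `L` maps `P_{k,j}` to
`P_{k,j-2}`, and on coefficients `L a = 0` is a two-term recurrence whose coefficient of `a_(l+1)`
never vanishes: the kernel is spanned by the solution with `a_0 = 1`, and its coefficients alternate
in sign. The alternating sum `Σ (-1)^l a_l` (evaluation at `z = i r`, up to a power of `i`)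
vanishes on `(r²+z²)·P_{k,j-2}`, which has codimension one, but not on the kernel. -/

noncomputable def monomialSum {ι : Type*} (s : Finset ι) (c e : ι → ℝ) (m : ι → ℕ) :
    ℝ → ℝ → ℝ :=
  fun r z => ∑ i ∈ s, c i * r ^ e i * z ^ m i

section monomialSum

variable {ι : Type*} {s : Finset ι} {c e : ι → ℝ} {m : ι → ℕ}

theorem pdz_monomialSum :
    pdz (monomialSum s c e m) = monomialSum s (fun i => c i * m i) e (fun i => m i - 1) := by
  ext r z
  refine (HasDerivAt.fun_sum fun i _ => ?_).deriv
  exact ((hasDerivAt_pow (m i) z).const_mul (c i * r ^ e i)).congr_deriv (by ring)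

theorem pdr_monomialSum {r : ℝ} (hr : r ≠ 0) (z : ℝ) :
    pdr (monomialSum s c e m) r z
      = monomialSum s (fun i => c i * e i) (fun i => e i - 1) m r z := by
  refine (HasDerivAt.fun_sum fun i _ => ?_).deriv
  exact (((hasDerivAt_rpow_const (Or.inl hr)).const_mul (c i)).mul_const
    (z ^ m i)).congr_deriv (by ring)

theorem pdr_pdr_monomialSum {r : ℝ} (hr : r ≠ 0) (z : ℝ) :
    pdr (pdr (monomialSum s c e m)) r z
      = monomialSum s (fun i => c i * e i * (e i - 1)) (fun i => e i - 1 - 1) m r z := by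
  have hnear : (fun r' => pdr (monomialSum s c e m) r' z)
      =ᶠ[nhds r] fun r' => monomialSum s (fun i => c i * e i) (fun i => e i - 1) m r' z :=
    (eventually_ne_nhds hr).mono fun r' hr' => pdr_monomialSum hr' z
  exact hnear.deriv_eq.trans (pdr_monomialSum hr z)

theorem Lop_monomialSum (n : ℕ) (lam : ℝ) {r : ℝ} (hr : r ≠ 0) (z : ℝ) :
    Lop n lam (monomialSum s c e m) r z
      = monomialSum s (fun i => -(c i * m i * (m i - 1 : ℕ))) e (fun i => m i - 1 - 1) r z
        + monomialSum s (fun i => c i * (lam - e i * (e i - 1) - n * e i))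
            (fun i => e i - 2) m r z := by
  simp only [Lop, pdz_monomialSum, pdr_pdr_monomialSum hr, pdr_monomialSum hr]
  simp only [monomialSum, mul_sum, ← sum_neg_distrib, ← sum_sub_distrib, ← sum_add_distrib]
  refine sum_congr rfl fun i _ => ?_
  have h1 : r ^ (e i - 1) = r ^ (e i - 2) * r := by
    rw [← rpow_add_one hr]; ring_nf
  have h2 : r ^ e i = r ^ (e i - 2) * r ^ 2 := by
    rw [← rpow_add_natCast hr]; norm_num
  rw [show e i - 1 - 1 = e i - 2 by ring, h1, h2]
  field_simp
  ring

end monomialSum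

noncomputable def lopCoeff (n : ℕ) (k : ℝ) (j : ℕ) (a : ℕ → ℝ) (l : ℕ) : ℝ :=
  -(((j - 2 * l) * (j - 2 * l - 1) : ℕ) : ℝ) * a l
    - 2 * (l + 1) * (2 * k + 2 * l + n + 1) * a (l + 1)

theorem polyFun_eq_monomialSum (k : ℝ) (j : ℕ) (a : ℕ → ℝ) :
    polyFun k j a = monomialSum (range (j / 2 + 1)) a (fun l => k + 2 * l) (fun l => j - 2 * l) :=
  rfl

section Lop

variable (n : ℕ) (k : ℝ) (j : ℕ) (a : ℕ → ℝ)

theorem Lop_polyFun (hj : 2 ≤ j) {r : ℝ} (hr : r ≠ 0) (z : ℝ) :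
    Lop n (k * (k + n - 1)) (polyFun k j a) r z = polyFun k (j - 2) (lopCoeff n k j a) r z := by
  rw [polyFun_eq_monomialSum, Lop_monomialSum n _ hr]
  obtain ⟨J, hJ⟩ : ∃ J, j / 2 = J + 1 := ⟨j / 2 - 1, by omega⟩
  have hJ' : (j - 2) / 2 = J := by omega
  simp only [monomialSum, polyFun, hJ, hJ']
  rw [sum_range_succ, sum_range_succ' _ (J + 1)]
  have htop : j - 2 * (J + 1) - 1 = 0 := by omega
  have hbot : k * (k + n - 1) - (k + 2 * ((0 : ℕ) : ℝ)) * (k + 2 * ((0 : ℕ) : ℝ) - 1)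
      - n * (k + 2 * ((0 : ℕ) : ℝ)) = 0 := by push_cast; ring
  rw [htop, hbot]
  simp only [Nat.cast_zero, mul_zero, zero_mul, neg_zero, add_zero]
  rw [← sum_add_distrib]
  refine sum_congr rfl fun l hl => ?_
  have hl := mem_range.mp hl
  rw [show j - 2 * l - 1 - 1 = j - 2 - 2 * l by omega,
    show j - 2 * (l + 1) = j - 2 - 2 * l by omega, show k + 2 * ((l + 1 : ℕ) : ℝ) - 2 = k + 2 * l by push_cast; ring, lopCoeff]
  push_cast
  ring

theorem Lop_polyFun_of_lt_two (hj : j < 2) {r : ℝ} (hr : r ≠ 0) (z : ℝ) :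
    Lop n (k * (k + n - 1)) (polyFun k j a) r z = 0 := by
  rw [polyFun_eq_monomialSum, Lop_monomialSum n _ hr]
  simp only [monomialSum, show j / 2 = 0 by omega, zero_add, sum_range_one,
    show j - 2 * 0 - 1 = 0 by omega]
  push_cast
  ring

end Lop

section polyFun

variable {k : ℝ} {j : ℕ}

theorem polyFun_congr {a b : ℕ → ℝ} (h : ∀ l ≤ j / 2, a l = b l) :
    polyFun k j a = polyFun k j b := by
  ext r z
  exact sum_congr rfl fun l hl => by rw [h l (Nat.lt_succ_iff.mp (mem_range.mp hl))]

theorem polyFun_add (a b : ℕ → ℝ) (r z : ℝ) :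
    polyFun k j (a + b) r z = polyFun k j a r z + polyFun k j b r z := by
  simp only [polyFun, ← sum_add_distrib, Pi.add_apply, add_mul]

theorem polyFun_smul (c : ℝ) (a : ℕ → ℝ) (r z : ℝ) :
    polyFun k j (c • a) r z = c * polyFun k j a r z := by
  simp only [polyFun, mul_sum, Pi.smul_apply, smul_eq_mul, mul_assoc]

theorem coeff_eq_of_polyFun_one_eq {a b : ℕ → ℝ} (h : ∀ z, polyFun k j a 1 z = polyFun k j b 1 z) :
    ∀ l ≤ j / 2, a l = b l := by
  open Polynomial in
  let P : (ℕ → ℝ) → ℝ[X] := fun a => ∑ l ∈ range (j / 2 + 1), C (a l) * X ^ (j - 2 * l)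
  have hP : P a = P b := Polynomial.funext fun z => by
    simpa [P, eval_finsetSum, polyFun] using h z
  have hcoeff : ∀ a, ∀ l ≤ j / 2, (P a).coeff (j - 2 * l) = a l := fun a l hl => by
    simp only [P, finsetSum_coeff, coeff_C_mul_X_pow]
    rw [sum_eq_single l (fun i hi hil => if_neg (by have := mem_range.mp hi; omega))
      (fun hl' => absurd (mem_range.mpr (by omega)) hl'), if_pos rfl]
  intro l hl
  rw [← hcoeff a l hl, hP, hcoeff b l hl]

theorem coeff_eq_zero_of_polyFun_one_eq_zero {a : ℕ → ℝ} (h : ∀ z, polyFun k j a 1 z = 0) :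
    ∀ l ≤ j / 2, a l = 0 :=
  coeff_eq_of_polyFun_one_eq fun z => by rw [h z]; simp [polyFun]

end polyFun

theorem Lop_polyFun_eq_zero_iff (n : ℕ) (k : ℝ) (j : ℕ) (a : ℕ → ℝ) :
    (∀ r, 0 < r → ∀ z, Lop n (k * (k + n - 1)) (polyFun k j a) r z = 0)
      ↔ ∀ l < j / 2, lopCoeff n k j a l = 0 := by
  rcases lt_or_ge j 2 with hj | hj
  · simp only [show j / 2 = 0 by omega, Nat.not_lt_zero, false_imp_iff, implies_true, iff_true]
    exact fun r hr z => Lop_polyFun_of_lt_two n k j a hj hr.ne' z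
  constructor
  · intro h l hl
    refine coeff_eq_zero_of_polyFun_one_eq_zero (k := k) (j := j - 2) (fun z => ?_) l (by omega)
    rw [← Lop_polyFun n k j a hj one_ne_zero, h 1 one_pos]
  · intro h r hr z
    rw [Lop_polyFun n k j a hj hr.ne']
    refine sum_eq_zero fun l hl => ?_
    rw [h l (by have := mem_range.mp hl; omega), zero_mul, zero_mul]

noncomputable def harmonicCoeff (n : ℕ) (k : ℝ) (j : ℕ) : ℕ → ℝ
  | 0 => 1
  | l + 1 => -(((j - 2 * l) * (j - 2 * l - 1) : ℕ) : ℝ) / (2 * (l + 1) * (2 * k + 2 * l + n + 1))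
      * harmonicCoeff n k j l

section harmonicCoeff

variable {n : ℕ} {k : ℝ} (hk : 0 ≤ k) (j : ℕ)
include hk

theorem lopCoeff_smul_harmonicCoeff (c : ℝ) (l : ℕ) :
    lopCoeff n k j (c • harmonicCoeff n k j) l = 0 := by
  have : (2 * (l + 1) * (2 * k + 2 * l + n + 1) : ℝ) ≠ 0 := by positivity
  simp only [lopCoeff, Pi.smul_apply, smul_eq_mul, harmonicCoeff]
  field_simp
  ring

theorem eq_mul_harmonicCoeff_of_lopCoeff_eq_zero {a : ℕ → ℝ}
    (h : ∀ l < j / 2, lopCoeff n k j a l = 0) : ∀ l ≤ j / 2, a l = a 0 * harmonicCoeff n k j l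
  | 0, _ => by simp [harmonicCoeff]
  | l + 1, hl => by
    have : (2 * (l + 1) * (2 * k + 2 * l + n + 1) : ℝ) ≠ 0 := by positivity
    have hrec := h l (by omega)
    rw [harmonicCoeff, ← mul_assoc, mul_comm (a 0), mul_assoc,
      ← eq_mul_harmonicCoeff_of_lopCoeff_eq_zero h l (by omega)]
    simp only [lopCoeff] at hrec
    field_simp
    linear_combination -hrec

theorem neg_one_pow_mul_harmonicCoeff_pos : ∀ l, 2 * l ≤ j → 0 < (-1) ^ l * harmonicCoeff n k j l
  | 0, _ => by simp [harmonicCoeff]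
  | l + 1, hl => by
    have hnum : (0 : ℝ) < ((j - 2 * l) * (j - 2 * l - 1) : ℕ) :=
      Nat.cast_pos.mpr (Nat.mul_pos (by omega) (by omega))
    have := neg_one_pow_mul_harmonicCoeff_pos l (by omega)
    rw [harmonicCoeff, pow_succ, show ∀ x y z w : ℝ, x * (-1) * (-y / z * w) = y / z * (x * w)
      from fun _ _ _ _ => by ring]
    exact mul_pos (div_pos hnum (by positivity)) this

end harmonicCoeff

def altSum (J : ℕ) (a : ℕ → ℝ) : ℝ := ∑ i ∈ range (J + 1), (-1) ^ i * a i

/-- Coefficients of `(r²+z²)·p` in `P_{k,j}`, `J = j/2`, when `p ∈ P_{k,j-2}` has coefficients `b`. -/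
def normSqMulCoeff (J : ℕ) (b : ℕ → ℝ) (l : ℕ) : ℝ :=
  (if l = 0 then 0 else b (l - 1)) + (if l = J then 0 else b l)

section altSum

variable {J : ℕ}

theorem altSum_congr {a b : ℕ → ℝ} (h : ∀ l ≤ J, a l = b l) : altSum J a = altSum J b :=
  sum_congr rfl fun l hl => by rw [h l (Nat.lt_succ_iff.mp (mem_range.mp hl))]

theorem altSum_smul_add (c : ℝ) (a b : ℕ → ℝ) :
    altSum J (c • a + b) = c * altSum J a + altSum J b := by
  simp only [altSum, Pi.add_apply, Pi.smul_apply, smul_eq_mul, mul_add, sum_add_distrib, mul_sum,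
    mul_left_comm]

theorem altSum_normSqMulCoeff (b : ℕ → ℝ) : altSum J (normSqMulCoeff J b) = 0 := by
  simp only [altSum, normSqMulCoeff, mul_add, sum_add_distrib]
  rw [sum_range_succ', sum_range_succ]
  simp only [if_pos, Nat.add_sub_cancel, mul_zero, add_zero, ← sum_add_distrib]
  refine sum_eq_zero fun i hi => ?_
  rw [if_neg (Nat.succ_ne_zero i), if_neg (mem_range.mp hi).ne, pow_succ]
  ring

theorem normSqMulCoeff_neg_one_pow_mul_altSum {t : ℕ → ℝ} (ht : altSum J t = 0) :
    ∀ l ≤ J, normSqMulCoeff J (fun i => (-1) ^ i * altSum i t) l = t l := by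
  have hsq : ∀ i, ((-1 : ℝ) ^ i) ^ 2 = 1 := fun i => by rw [← pow_mul, mul_comm, pow_mul]; simp
  rintro (_ | l) hl
  · by_cases hJ : 0 = J
    · subst hJ; simpa [normSqMulCoeff, altSum] using ht.symm
    · simp [normSqMulCoeff, altSum, if_neg hJ]
  · have hstep : altSum (l + 1) t = altSum l t + (-1) ^ (l + 1) * t (l + 1) := sum_range_succ _ _
    simp only [normSqMulCoeff, if_neg (Nat.succ_ne_zero l), Nat.add_sub_cancel]
    split_ifs with hJ
    · subst hJ
      rw [hstep] at ht
      linear_combination (-1) ^ l * ht + t (l + 1) * hsq l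
    · rw [hstep, pow_succ]
      linear_combination t (l + 1) * hsq l

end altSum

theorem mul_polyFun_sub_two (k : ℝ) {j : ℕ} (hj : 2 ≤ j) (b : ℕ → ℝ) {r : ℝ} (hr : r ≠ 0)
    (z : ℝ) :
    (r ^ 2 + z ^ 2) * polyFun k (j - 2) b r z = polyFun k j (normSqMulCoeff (j / 2) b) r z := by
  obtain ⟨J, hJ⟩ : ∃ J, j / 2 = J + 1 := ⟨j / 2 - 1, by omega⟩
  simp only [polyFun, normSqMulCoeff, hJ, show (j - 2) / 2 = J by omega, add_mul, sum_add_distrib,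
    mul_sum]
  congr 1
  · rw [sum_range_succ' _ (J + 1), if_pos rfl, zero_mul, zero_mul, add_zero]
    refine sum_congr rfl fun l _ => ?_
    rw [if_neg (Nat.succ_ne_zero l), Nat.add_sub_cancel,
      show j - 2 * (l + 1) = j - 2 - 2 * l by omega, Nat.cast_succ,
      show k + 2 * ((l : ℝ) + 1) = k + 2 * l + (2 : ℕ) by push_cast; ring, rpow_add_natCast hr]
    ring
  · rw [sum_range_succ _ (J + 1), if_pos rfl, zero_mul, zero_mul, add_zero]
    refine sum_congr rfl fun l hl => ?_
    have hl := mem_range.mp hl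
    rw [if_neg hl.ne, show j - 2 * l = j - 2 - 2 * l + 2 by omega, pow_add]
    ring

section decomposition

variable {n : ℕ} {k : ℝ} (hk : 0 ≤ k) {j : ℕ}
include hk

theorem altSum_harmonicCoeff_pos : 0 < altSum (j / 2) (harmonicCoeff n k j) :=
  sum_pos (fun i hi => neg_one_pow_mul_harmonicCoeff_pos hk j i
    (by have := mem_range.mp hi; omega)) nonempty_range_add_one

theorem exists_smul_harmonicCoeff_add_normSqMulCoeff (a : ℕ → ℝ) :
    ∃ (c : ℝ) (b : ℕ → ℝ),
      ∀ l ≤ j / 2, a l = (c • harmonicCoeff n k j + normSqMulCoeff (j / 2) b) l := by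
  obtain ⟨c, hc⟩ : ∃ c, c * altSum (j / 2) (harmonicCoeff n k j) = altSum (j / 2) a :=
    ⟨_, div_mul_cancel₀ _ (altSum_harmonicCoeff_pos hk).ne'⟩
  set t := (-c) • harmonicCoeff n k j + a
  have ht : altSum (j / 2) t = 0 := by rw [altSum_smul_add, neg_mul, hc, neg_add_cancel]
  refine ⟨c, fun i => (-1) ^ i * altSum i t, fun l hl => ?_⟩
  rw [Pi.add_apply, normSqMulCoeff_neg_one_pow_mul_altSum ht l hl]
  simp [t]

theorem eq_of_smul_harmonicCoeff_add_normSqMulCoeff {c c' : ℝ} {b b' : ℕ → ℝ}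
    (h : ∀ l ≤ j / 2, (c • harmonicCoeff n k j + normSqMulCoeff (j / 2) b) l
      = (c' • harmonicCoeff n k j + normSqMulCoeff (j / 2) b') l) : c = c' := by
  have h' := altSum_congr h
  rw [altSum_smul_add, altSum_smul_add, altSum_normSqMulCoeff, altSum_normSqMulCoeff, add_zero,
    add_zero] at h'
  exact mul_right_cancel₀ (altSum_harmonicCoeff_pos hk).ne' h'

end decomposition

section kernel

variable {n : ℕ} {k : ℝ} (hk : 0 ≤ k) (j : ℕ)
include hk

theorem Lop_polyFun_smul_harmonicCoeff (c : ℝ) :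
    ∀ r, 0 < r → ∀ z, Lop n (k * (k + n - 1)) (polyFun k j (c • harmonicCoeff n k j)) r z = 0 :=
  (Lop_polyFun_eq_zero_iff n k j _).mpr fun l _ => lopCoeff_smul_harmonicCoeff hk j c l

theorem polyFun_eq_smul_harmonicCoeff_of_Lop_eq_zero {a : ℕ → ℝ}
    (ha : ∀ r, 0 < r → ∀ z, Lop n (k * (k + n - 1)) (polyFun k j a) r z = 0) :
    polyFun k j a = polyFun k j (a 0 • harmonicCoeff n k j) :=
  polyFun_congr (eq_mul_harmonicCoeff_of_lopCoeff_eq_zero hk j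
    ((Lop_polyFun_eq_zero_iff n k j a).mp ha))

theorem Pspace_inter_ker_eq_span :
    ∃ h ∈ Pspace k j,
      (∀ r : ℝ, 0 < r → ∀ z : ℝ, Lop n (k * (k + n - 1)) h r z = 0)
      ∧ (∃ r : ℝ, 0 < r ∧ ∃ z : ℝ, h r z ≠ 0)
      ∧ ∀ g ∈ Pspace k j, (∀ r : ℝ, 0 < r → ∀ z : ℝ, Lop n (k * (k + n - 1)) g r z = 0) →
          ∃ c : ℝ, ∀ r : ℝ, 0 < r → ∀ z : ℝ, g r z = c * h r z := by
  refine ⟨polyFun k j (harmonicCoeff n k j), ⟨_, rfl⟩,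
    by simpa using Lop_polyFun_smul_harmonicCoeff hk j 1, ⟨1, one_pos, ?_⟩, ?_⟩
  · by_contra! h
    simpa [harmonicCoeff] using coeff_eq_zero_of_polyFun_one_eq_zero h 0 (Nat.zero_le _)
  · rintro _ ⟨b, rfl⟩ hb
    exact ⟨b 0, fun r _ z => by
      rw [polyFun_eq_smul_harmonicCoeff_of_Lop_eq_zero hk j hb, polyFun_smul]⟩

theorem Pspace_eq_ker_add_normSq_mul (hj : 2 ≤ j) :
    ∀ f ∈ Pspace k j,
      ∃ h ∈ Pspace k j, ∃ p ∈ Pspace k (j - 2),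
        (∀ r : ℝ, 0 < r → ∀ z : ℝ, Lop n (k * (k + n - 1)) h r z = 0)
        ∧ (∀ r : ℝ, 0 < r → ∀ z : ℝ, f r z = h r z + (r ^ 2 + z ^ 2) * p r z)
        ∧ ∀ h' ∈ Pspace k j, ∀ p' ∈ Pspace k (j - 2),
            (∀ r : ℝ, 0 < r → ∀ z : ℝ, Lop n (k * (k + n - 1)) h' r z = 0) →
            (∀ r : ℝ, 0 < r → ∀ z : ℝ, f r z = h' r z + (r ^ 2 + z ^ 2) * p' r z) →
            ∀ r : ℝ, 0 < r → ∀ z : ℝ, h' r z = h r z ∧ p' r z = p r z := by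
  rintro _ ⟨a, rfl⟩
  obtain ⟨c, b, hab⟩ := exists_smul_harmonicCoeff_add_normSqMulCoeff (n := n) hk a
  have hsplit : ∀ r, r ≠ 0 → ∀ z, polyFun k j a r z
      = polyFun k j (c • harmonicCoeff n k j) r z + (r ^ 2 + z ^ 2) * polyFun k (j - 2) b r z :=
    fun r hr z => by rw [polyFun_congr hab, polyFun_add, mul_polyFun_sub_two k hj b hr]
  refine ⟨_, ⟨_, rfl⟩, _, ⟨b, rfl⟩, Lop_polyFun_smul_harmonicCoeff hk j c,
    fun r hr z => hsplit r hr.ne' z, ?_⟩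
  rintro _ ⟨a', rfl⟩ _ ⟨b', rfl⟩ hker' hsplit'
  rw [polyFun_eq_smul_harmonicCoeff_of_Lop_eq_zero hk j hker'] at hsplit' ⊢
  obtain rfl : c = a' 0 := eq_of_smul_harmonicCoeff_add_normSqMulCoeff hk
    (coeff_eq_of_polyFun_one_eq fun z => by
      rw [← polyFun_congr hab, hsplit' 1 one_pos z, polyFun_add,
        mul_polyFun_sub_two k hj b' one_ne_zero])
  intro r hr z
  have hq : r ^ 2 + z ^ 2 ≠ 0 := by positivity
  refine ⟨rfl, mul_left_cancel₀ hq ?_⟩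
  linarith [hsplit r hr.ne' z, hsplit' r hr z]

end kernel

theorem Pspace_structure_general (n : ℕ) (k : ℝ) (hk : 0 ≤ k) (lam : ℝ)
    (hlam : lam = k * (k + (n : ℝ) - 1)) :
    -- (i)
    (∀ j : ℕ, 2 ≤ j → ∀ f ∈ Pspace k j, ∃ g ∈ Pspace k (j - 2),
      ∀ r : ℝ, 0 < r → ∀ z : ℝ, Lop n lam f r z = g r z)
    -- (ii)
    ∧ (∀ j : ℕ, ∃ h ∈ Pspace k j,
        (∀ r : ℝ, 0 < r → ∀ z : ℝ, Lop n lam h r z = 0)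
        ∧ (∃ r : ℝ, 0 < r ∧ ∃ z : ℝ, h r z ≠ 0)
        ∧ ∀ g ∈ Pspace k j, (∀ r : ℝ, 0 < r → ∀ z : ℝ, Lop n lam g r z = 0) →
            ∃ c : ℝ, ∀ r : ℝ, 0 < r → ∀ z : ℝ, g r z = c * h r z)
    -- (iii)
    ∧ (∀ j : ℕ, 2 ≤ j → ∀ f ∈ Pspace k j,
        ∃ h ∈ Pspace k j, ∃ p ∈ Pspace k (j - 2),
          (∀ r : ℝ, 0 < r → ∀ z : ℝ, Lop n lam h r z = 0)
          ∧ (∀ r : ℝ, 0 < r → ∀ z : ℝ, f r z = h r z + (r ^ 2 + z ^ 2) * p r z)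
          ∧ ∀ h' ∈ Pspace k j, ∀ p' ∈ Pspace k (j - 2),
              (∀ r : ℝ, 0 < r → ∀ z : ℝ, Lop n lam h' r z = 0) →
              (∀ r : ℝ, 0 < r → ∀ z : ℝ, f r z = h' r z + (r ^ 2 + z ^ 2) * p' r z) →
              ∀ r : ℝ, 0 < r → ∀ z : ℝ, h' r z = h r z ∧ p' r z = p r z) := by
  subst hlam
  refine ⟨?_, Pspace_inter_ker_eq_span hk, fun j hj => Pspace_eq_ker_add_normSq_mul hk j hj⟩
  rintro j hj _ ⟨a, rfl⟩
  exact ⟨_, ⟨lopCoeff n k j a, rfl⟩, fun r hr z => Lop_polyFun n k j a hj hr.ne' z⟩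

/-- Structure of the spaces `P_{k,j}` under the operator `L`:
(i) `L` maps `P_{k,j}` into `P_{k,j-2}` (as functions on `(0,∞) × ℝ`);
(ii) `H_{k,j} = P_{k,j} ∩ ker L` is one-dimensional;
(iii) `P_{k,j} = H_{k,j} ⊕ (r²+z²)·P_{k,j-2}`. -/
theorem Pspace_structure (n : ℕ) (hn : 1 ≤ n) (k : ℝ) (hk : 0 ≤ k) (lam : ℝ)
    (hlam : lam = k * (k + (n : ℝ) - 1)) :
    -- (i)
    (∀ j : ℕ, 2 ≤ j → ∀ f ∈ Pspace k j, ∃ g ∈ Pspace k (j - 2),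
      ∀ r : ℝ, 0 < r → ∀ z : ℝ, Lop n lam f r z = g r z)
    -- (ii)
    ∧ (∀ j : ℕ, ∃ h ∈ Pspace k j,
        (∀ r : ℝ, 0 < r → ∀ z : ℝ, Lop n lam h r z = 0)
        ∧ (∃ r : ℝ, 0 < r ∧ ∃ z : ℝ, h r z ≠ 0)
        ∧ ∀ g ∈ Pspace k j, (∀ r : ℝ, 0 < r → ∀ z : ℝ, Lop n lam g r z = 0) →
            ∃ c : ℝ, ∀ r : ℝ, 0 < r → ∀ z : ℝ, g r z = c * h r z)
    -- (iii)
    ∧ (∀ j : ℕ, 2 ≤ j → ∀ f ∈ Pspace k j,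
        ∃ h ∈ Pspace k j, ∃ p ∈ Pspace k (j - 2),
          (∀ r : ℝ, 0 < r → ∀ z : ℝ, Lop n lam h r z = 0)
          ∧ (∀ r : ℝ, 0 < r → ∀ z : ℝ, f r z = h r z + (r ^ 2 + z ^ 2) * p r z)
          ∧ ∀ h' ∈ Pspace k j, ∀ p' ∈ Pspace k (j - 2),
              (∀ r : ℝ, 0 < r → ∀ z : ℝ, Lop n lam h' r z = 0) →
              (∀ r : ℝ, 0 < r → ∀ z : ℝ, f r z = h' r z + (r ^ 2 + z ^ 2) * p' r z) →
              ∀ r : ℝ, 0 < r → ∀ z : ℝ, h' r z = h r z ∧ p' r z = p r z) :=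
  Pspace_structure_general n k hk lam hlam
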